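/- Let q be a real number with q ≥ 3, let t > 1 and z > 0, and assume that if t ≥ t₃(q) then either 0 < z < z_c^−(t,q) or z > z_c^+(t,q). Then the second iterate R²_{z,t,q} has exactly one real fixed point; this fixed point lies in (0,∞) and is an attracting fixed point of the first iterate R_{z,t,q} (i.e., R_{z,t,q}(w) = w and |R'_{z,t,q}(w)| < 1). -/

import Mathlib

/-!
Write `R = Rmap z t q` as `z g²` with the Möbius map `g w = (t + b w) / (1 + a w)`, where
`a = (q - 1) t`, `b = 1 + (q - 2) t`; `g` is decreasing on `[0, ∞)` because
`t a - b = (t - 1)(1 + (q - 1) t) ≥ 0`. The substitution `s = g w` semiconjugates `R` to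
`h s = g (z s²)` (`g ∘ R = h ∘ g`), and `h'(s) = R'(z s²)`. Both points of a 2-cycle `s₁ ≠ s₂`
of `h` are roots of `Q s = z (a + b² z) s² - z (t a - b) s + 1 + b z t`, and at a fixed point `s`
of `h` one has `(1 + a z s²)² (1 + h'(s)) = Q s`. The discriminant of `Q` is `-z` times a quadratic
in `z` whose roots are `z_c^±(t, q)` and whose own discriminant has the sign of `t - t₃(q)`, so the
hypothesis makes `Q` positive. Hence `R` has no 2-cycle, and its fixed point (found by the
intermediate value theorem, unique since `R` is decreasing) is attracting.
-/

noncomputable section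

/-- The renormalization map `R_{z,t,q}(w) = z·((t + w + (q−2)tw)/(1 + (q−1)tw))²`,
viewed as a function of the real variable `w`. -/
def Rmap (z t q : ℝ) (w : ℝ) : ℝ :=
  z * ((t + w + (q - 2) * t * w) / (1 + (q - 1) * t * w)) ^ 2

/-- The second iterate `R²_{z,t,q}(w) = R_{z,t,q}(R_{z,t,q}(w))`. -/
def Rmap2 (z t q : ℝ) (w : ℝ) : ℝ := Rmap z t q (Rmap z t q w)

/-- `t₃(q) = 3(3q − 6 + √(9q² − 32q + 32))/(2(q − 1))`. -/
def tThree (q : ℝ) : ℝ :=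
  3 * (3 * q - 6 + Real.sqrt (9 * q ^ 2 - 32 * q + 32)) / (2 * (q - 1))

/-- `z_c^+(t,q)`. -/
def zcPlus (q t : ℝ) : ℝ :=
  ((-3 - 6 * (q - 2) * t - 3 * (2 + (q - 2) * q) * t ^ 2 - 6 * (q - 2) * (q - 1) * t ^ 3
      + (q - 1) ^ 2 * t ^ 4)
    + Real.sqrt ((t - 1) ^ 3 * (1 - t + q * t) ^ 3 * (-9 + 18 * t - 9 * q * t - t ^ 2 + q * t ^ 2)))
    / (8 * t * (1 - 2 * t + q * t) ^ 3)

/-- `z_c^−(t,q)`. -/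
def zcMinus (q t : ℝ) : ℝ :=
  ((-3 - 6 * (q - 2) * t - 3 * (2 + (q - 2) * q) * t ^ 2 - 6 * (q - 2) * (q - 1) * t ^ 3
      + (q - 1) ^ 2 * t ^ 4)
    - Real.sqrt ((t - 1) ^ 3 * (1 - t + q * t) ^ 3 * (-9 + 18 * t - 9 * q * t - t ^ 2 + q * t ^ 2)))
    / (8 * t * (1 - 2 * t + q * t) ^ 3)

lemma AntitoneOn.eq_of_fixed {α : Type*} [LinearOrder α] {f : α → α} {s : Set α}
    (hf : AntitoneOn f s) {x y : α} (hx : x ∈ s) (hy : y ∈ s) (hfx : f x = x) (hfy : f y = y) :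
    x = y := by
  rcases le_total x y with h | h
  · exact h.antisymm (by simpa only [hfx, hfy] using hf hx hy h)
  · exact (h.antisymm (by simpa only [hfx, hfy] using hf hy hx h)).symm

section Quadratic

lemma four_mul_quadratic_eq (A B C x : ℝ) :
    4 * A * (A * (x * x) + B * x + C) = (2 * A * x + B) ^ 2 - discrim A B C := by
  rw [discrim]; ring

variable {A B C x : ℝ}

lemma quadratic_pos_of_discrim_neg (hA : 0 ≤ A) (hd : discrim A B C < 0) :
    0 < A * (x * x) + B * x + C := by
  have h := four_mul_quadratic_eq A B C x
  have hpos : 0 < 4 * A * (A * (x * x) + B * x + C) := by nlinarith [sq_nonneg (2 * A * x + B)]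
  exact pos_of_mul_pos_right hpos (by positivity)

lemma quadratic_pos_of_lt_or_gt_roots (hA : 0 < A)
    (hx : x < (-B - √(discrim A B C)) / (2 * A) ∨ (-B + √(discrim A B C)) / (2 * A) < x) :
    0 < A * (x * x) + B * x + C := by
  have hroot : √(discrim A B C) < |2 * A * x + B| := by
    rcases hx with hx | hx
    · rw [lt_div_iff₀ (by positivity)] at hx
      rw [abs_of_neg (by linarith [Real.sqrt_nonneg (discrim A B C)])]
      linarith
    · rw [div_lt_iff₀ (by positivity)] at hx
      rw [abs_of_pos (by linarith [Real.sqrt_nonneg (discrim A B C)])]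
      linarith
  have hd : discrim A B C < (2 * A * x + B) ^ 2 := by
    calc discrim A B C ≤ √(discrim A B C) ^ 2 := by rw [Real.sq_sqrt']; exact le_max_left _ _
      _ < |2 * A * x + B| ^ 2 := by gcongr
      _ = (2 * A * x + B) ^ 2 := sq_abs _
  have h := four_mul_quadratic_eq A B C x
  exact pos_of_mul_pos_right (by linarith) (by positivity : (0:ℝ) ≤ 4 * A)

end Quadratic

def mobiusMap (a b t w : ℝ) : ℝ := (t + b * w) / (1 + a * w)

def renormMap (a b t z w : ℝ) : ℝ := z * mobiusMap a b t w ^ 2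

def cycleQuadratic (a b t z s : ℝ) : ℝ :=
  z * (a + b ^ 2 * z) * (s * s) + -(z * (t * a - b)) * s + (1 + b * z * t)

section Mobius

variable {a b t z : ℝ}

lemma mobiusMap_pos (ha : 0 ≤ a) (hb : 0 ≤ b) (ht : 0 < t) {w : ℝ} (hw : 0 ≤ w) :
    0 < mobiusMap a b t w :=
  div_pos (by positivity) (by positivity)

lemma mobiusMap_sub_mobiusMap {x y : ℝ} (hx : 1 + a * x ≠ 0) (hy : 1 + a * y ≠ 0) :
    mobiusMap a b t x - mobiusMap a b t y
      = (t * a - b) * (y - x) / ((1 + a * x) * (1 + a * y)) := by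
  rw [mobiusMap, mobiusMap, div_sub_div _ _ hx hy]
  ring

lemma mobiusMap_antitoneOn (ha : 0 ≤ a) (hc : b ≤ t * a) :
    AntitoneOn (mobiusMap a b t) (Set.Ici 0) := by
  intro x hx y hy hxy
  have hdx : 0 < 1 + a * x := by have := Set.mem_Ici.1 hx; positivity
  have hdy : 0 < 1 + a * y := by have := Set.mem_Ici.1 hy; positivity
  rw [← sub_nonneg, mobiusMap_sub_mobiusMap hdx.ne' hdy.ne']
  exact div_nonneg (mul_nonneg (by linarith) (by linarith)) (by positivity)

lemma hasDerivAt_mobiusMap {w : ℝ} (hw : 1 + a * w ≠ 0) :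
    HasDerivAt (mobiusMap a b t) (-(t * a - b) / (1 + a * w) ^ 2) w := by
  have hnum : HasDerivAt (fun x => t + b * x) b w := by
    simpa using ((hasDerivAt_id w).const_mul b).const_add t
  have hden : HasDerivAt (fun x => 1 + a * x) a w := by
    simpa using ((hasDerivAt_id w).const_mul a).const_add 1
  exact (hnum.div hden hw).congr_deriv (by ring)

lemma continuous_mobiusMap_comp_sq (ha : 0 ≤ a) (hz : 0 ≤ z) :
    Continuous fun s => mobiusMap a b t (z * s ^ 2) :=
  Continuous.div (by fun_prop) (by fun_prop) fun _ => by positivity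

lemma exists_pos_mobiusMap_sq_eq_self (ha : 0 ≤ a) (hb : 0 ≤ b) (ht : 0 < t) (hz : 0 ≤ z)
    (hc : b ≤ t * a) : ∃ s, 0 < s ∧ mobiusMap a b t (z * s ^ 2) = s := by
  set f := fun s => mobiusMap a b t (z * s ^ 2) - s
  have hf : Continuous f := (continuous_mobiusMap_comp_sq ha hz).sub continuous_id
  have hf0 : f 0 = t := by simp [f, mobiusMap]
  have hft : f t ≤ 0 := by
    have := mobiusMap_antitoneOn (b := b) ha hc Set.self_mem_Ici
      (Set.mem_Ici.2 (by positivity : 0 ≤ z * t ^ 2))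
      (by positivity)
    simp only [f, mobiusMap, mul_zero, add_zero, div_one] at this ⊢
    linarith
  obtain ⟨s, -, hs⟩ := intermediate_value_Icc' ht.le hf.continuousOn ⟨hft, hf0 ▸ ht.le⟩
  have hs : mobiusMap a b t (z * s ^ 2) = s := sub_eq_zero.1 hs
  exact ⟨s, hs ▸ mobiusMap_pos ha hb ht (by positivity), hs⟩

lemma sq_sub_eq_cycleQuadratic_of_eq_self {s : ℝ} (hD : 1 + a * (z * s ^ 2) ≠ 0)
    (h : mobiusMap a b t (z * s ^ 2) = s) :
    (1 + a * (z * s ^ 2)) ^ 2 - 2 * z * (t * a - b) * s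
      = cycleQuadratic a b t z s := by
  rw [mobiusMap, div_eq_iff hD] at h
  rw [cycleQuadratic]
  linear_combination (-(z * (a * s + b))) * h

lemma cycleQuadratic_eq_zero_of_two_cycle {s₁ s₂ : ℝ} (hD₁ : 1 + a * (z * s₁ ^ 2) ≠ 0)
    (hD₂ : 1 + a * (z * s₂ ^ 2) ≠ 0) (h₁ : mobiusMap a b t (z * s₁ ^ 2) = s₂)
    (h₂ : mobiusMap a b t (z * s₂ ^ 2) = s₁) (hne : s₁ ≠ s₂) :
    cycleQuadratic a b t z s₁ = 0 := by
  rw [cycleQuadratic]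
  rw [mobiusMap, div_eq_iff hD₁] at h₁
  rw [mobiusMap, div_eq_iff hD₂] at h₂
  have hM : 1 - a * z * s₁ * s₂ + b * z * (s₁ + s₂) = 0 := by
    have h : (s₂ - s₁) * (1 - a * z * s₁ * s₂ + b * z * (s₁ + s₂)) = 0 := by
      linear_combination h₂ - h₁
    exact (mul_eq_zero.1 h).resolve_left (sub_ne_zero.2 hne.symm)
  -- `hM` and `h₁ + h₂` pin down `s₁ + s₂` and `s₁ s₂`; `s₁` is a root of the resulting quadratic
  linear_combination (1 + b * z * s₁ + z * (a * s₁ - b) * (s₁ + s₂) / 2) * hM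
    - z * (a * s₁ - b) / 2 * (h₁ + h₂)

lemma cycleQuadratic_pos (ha : 0 ≤ a) (hz : 0 ≤ z)
    (hd : discrim (z * (a + b ^ 2 * z)) (-(z * (t * a - b))) (1 + b * z * t) < 0) (s : ℝ) :
    0 < cycleQuadratic a b t z s :=
  quadratic_pos_of_discrim_neg (by positivity) hd

lemma eq_of_mobiusMap_sq_two_cycle (ha : 0 ≤ a) (hz : 0 ≤ z)
    (hd : discrim (z * (a + b ^ 2 * z)) (-(z * (t * a - b))) (1 + b * z * t) < 0) {s₁ s₂ : ℝ}
    (h₁ : mobiusMap a b t (z * s₁ ^ 2) = s₂) (h₂ : mobiusMap a b t (z * s₂ ^ 2) = s₁) :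
    s₁ = s₂ := by
  by_contra hne
  exact (cycleQuadratic_pos ha hz hd s₁).ne'
    (cycleQuadratic_eq_zero_of_two_cycle (by positivity) (by positivity) h₁ h₂ hne)

lemma renormMap_nonneg (hz : 0 ≤ z) (w : ℝ) : 0 ≤ renormMap a b t z w := by
  unfold renormMap; positivity

lemma renormMap_antitoneOn (ha : 0 ≤ a) (hb : 0 ≤ b) (ht : 0 < t) (hz : 0 ≤ z)
    (hc : b ≤ t * a) :
    AntitoneOn (renormMap a b t z) (Set.Ici 0) := fun x _ y hy hxy =>
  mul_le_mul_of_nonneg_left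
    (pow_le_pow_left₀ (mobiusMap_pos ha hb ht hy).le
      (mobiusMap_antitoneOn ha hc ‹_› hy hxy) 2) hz

lemma hasDerivAt_renormMap {w : ℝ} (hw : 1 + a * w ≠ 0) :
    HasDerivAt (renormMap a b t z)
      (z * (2 * mobiusMap a b t w * (-(t * a - b) / (1 + a * w) ^ 2))) w :=
  (((hasDerivAt_mobiusMap hw).pow 2).const_mul z).congr_deriv (by push_cast; ring)

lemma exists_pos_renormMap_eq_self (ha : 0 ≤ a) (hb : 0 ≤ b) (ht : 0 < t) (hz : 0 < z)
    (hc : b ≤ t * a) : ∃ w, 0 < w ∧ renormMap a b t z w = w := by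
  obtain ⟨s, hs, hfix⟩ := exists_pos_mobiusMap_sq_eq_self ha hb ht hz.le hc
  exact ⟨z * s ^ 2, by positivity, by rw [renormMap, hfix]⟩

lemma renormMap_eq_self_of_two_periodic (ha : 0 ≤ a) (hz : 0 ≤ z)
    (hd : discrim (z * (a + b ^ 2 * z)) (-(z * (t * a - b))) (1 + b * z * t) < 0) {w : ℝ}
    (h : renormMap a b t z (renormMap a b t z w) = w) : renormMap a b t z w = w := by
  have hs := eq_of_mobiusMap_sq_two_cycle ha hz hd (s₁ := mobiusMap a b t w)
    (s₂ := mobiusMap a b t (renormMap a b t z w)) rfl (by rw [← renormMap, h])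
  rw [renormMap, hs]
  exact h

lemma abs_deriv_renormMap_lt_one (ha : 0 ≤ a) (hb : 0 ≤ b) (ht : 0 < t) (hz : 0 ≤ z)
    (hc : b ≤ t * a)
    (hd : discrim (z * (a + b ^ 2 * z)) (-(z * (t * a - b))) (1 + b * z * t) < 0) {w : ℝ}
    (hw : 0 ≤ w) (hfix : renormMap a b t z w = w) : |deriv (renormMap a b t z) w| < 1 := by
  set s := mobiusMap a b t w with hs_def
  have hs : 0 < s := mobiusMap_pos ha hb ht hw
  have hw_eq : z * s ^ 2 = w := hfix
  have hD : 0 < 1 + a * w := by positivity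
  have hQ := sq_sub_eq_cycleQuadratic_of_eq_self (hw_eq ▸ hD.ne') (hw_eq ▸ hs_def.symm)
  rw [hw_eq] at hQ
  have hQpos := cycleQuadratic_pos ha hz hd s
  have hc' : 0 ≤ 2 * z * (t * a - b) * s := by have := sub_nonneg.2 hc; positivity
  rw [(hasDerivAt_renormMap hD.ne').deriv, ← hs_def,
    show z * (2 * s * (-(t * a - b) / (1 + a * w) ^ 2))
      = -(2 * z * (t * a - b) * s / (1 + a * w) ^ 2) by ring,
    abs_neg, abs_of_nonneg (by positivity), div_lt_one (by positivity)]
  linarith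

theorem renormMap_unique_attracting_fixedPoint (ha : 0 ≤ a) (hb : 0 ≤ b) (ht : 0 < t)
    (hz : 0 < z) (hc : b ≤ t * a)
    (hd : discrim (z * (a + b ^ 2 * z)) (-(z * (t * a - b))) (1 + b * z * t) < 0) :
    ∃ w, 0 < w ∧ renormMap a b t z w = w ∧ |deriv (renormMap a b t z) w| < 1 ∧
      ∀ w', renormMap a b t z (renormMap a b t z w') = w' → w' = w := by
  obtain ⟨w, hw, hfix⟩ := exists_pos_renormMap_eq_self ha hb ht hz hc
  refine ⟨w, hw, hfix, abs_deriv_renormMap_lt_one ha hb ht hz.le hc hd hw.le hfix,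
    fun w' h => ?_⟩
  have hfix' := renormMap_eq_self_of_two_periodic ha hz.le hd h
  exact (renormMap_antitoneOn ha hb ht hz.le hc).eq_of_fixed
    (hfix' ▸ renormMap_nonneg hz.le w') hw.le hfix' hfix

end Mobius

lemma Rmap_eq_renormMap (z t q : ℝ) :
    Rmap z t q = renormMap ((q - 1) * t) (1 + (q - 2) * t) t z := by
  funext w
  simp only [Rmap, renormMap, mobiusMap]
  ring

section Critical

variable {q t : ℝ}

def criticalLinCoeff (q t : ℝ) : ℝ :=
  3 + 6 * (q - 2) * t + 3 * (2 + (q - 2) * q) * t ^ 2 + 6 * (q - 2) * (q - 1) * t ^ 3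
    - (q - 1) ^ 2 * t ^ 4

lemma discrim_critical_eq (q t : ℝ) :
    discrim (4 * t * (1 + (q - 2) * t) ^ 3) (criticalLinCoeff q t) (4 * ((q - 1) * t))
      = (t - 1) ^ 3 * (1 - t + q * t) ^ 3 * (-9 + 18 * t - 9 * q * t - t ^ 2 + q * t ^ 2) := by
  rw [discrim, criticalLinCoeff]
  ring

lemma zcMinus_eq (q t : ℝ) :
    zcMinus q t = (-criticalLinCoeff q t
      - √(discrim (4 * t * (1 + (q - 2) * t) ^ 3) (criticalLinCoeff q t) (4 * ((q - 1) * t))))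
        / (2 * (4 * t * (1 + (q - 2) * t) ^ 3)) := by
  rw [discrim_critical_eq, zcMinus, criticalLinCoeff]
  ring

lemma zcPlus_eq (q t : ℝ) :
    zcPlus q t = (-criticalLinCoeff q t
      + √(discrim (4 * t * (1 + (q - 2) * t) ^ 3) (criticalLinCoeff q t) (4 * ((q - 1) * t))))
        / (2 * (4 * t * (1 + (q - 2) * t) ^ 3)) := by
  rw [discrim_critical_eq, zcPlus, criticalLinCoeff]
  ring

lemma tThree_quadratic_neg (hq : 1 < q) (ht : 0 < t) (h : t < tThree q) :
    -9 + 18 * t - 9 * q * t - t ^ 2 + q * t ^ 2 < 0 := by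
  set r := √(9 * q ^ 2 - 32 * q + 32)
  have hr2 : r ^ 2 = 9 * q ^ 2 - 32 * q + 32 := Real.sq_sqrt (by nlinarith [sq_nonneg (9 * q - 16)])
  have hr : 9 * (q - 2) ≤ 3 * r := by nlinarith [Real.sqrt_nonneg (9 * q ^ 2 - 32 * q + 32)]
  have hlt : 2 * (q - 1) * t < 9 * (q - 2) + 3 * r := by
    rw [tThree, lt_div_iff₀ (by linarith)] at h
    linarith
  have hfactor : 4 * (q - 1) * (-9 + 18 * t - 9 * q * t - t ^ 2 + q * t ^ 2)
      = (2 * (q - 1) * t - 9 * (q - 2) - 3 * r) * (2 * (q - 1) * t - 9 * (q - 2) + 3 * r) := by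
    linear_combination 9 * hr2
  have hneg : 4 * (q - 1) * (-9 + 18 * t - 9 * q * t - t ^ 2 + q * t ^ 2) < 0 := by
    rw [hfactor]
    exact mul_neg_of_neg_of_pos (by linarith) (by nlinarith)
  exact neg_of_mul_neg_right hneg (by linarith)

lemma discrim_critical_neg (hq : 1 < q) (ht : 1 < t) (h : t < tThree q) :
    discrim (4 * t * (1 + (q - 2) * t) ^ 3) (criticalLinCoeff q t) (4 * ((q - 1) * t)) < 0 := by
  rw [discrim_critical_eq]
  refine mul_neg_of_pos_of_neg (mul_pos (pow_pos (sub_pos.2 ht) 3) (pow_pos ?_ 3))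
    (tThree_quadratic_neg hq (by linarith) h)
  nlinarith

lemma critical_quadratic_pos (hq : 2 ≤ q) (ht : 1 < t) {z : ℝ}
    (hreg : tThree q ≤ t → z < zcMinus q t ∨ zcPlus q t < z) :
    0 < 4 * t * (1 + (q - 2) * t) ^ 3 * (z * z) + criticalLinCoeff q t * z + 4 * ((q - 1) * t) := by
  have hA : 0 < 4 * t * (1 + (q - 2) * t) ^ 3 := by
    have : 0 < 1 + (q - 2) * t := by nlinarith
    positivity
  by_cases htt : tThree q ≤ t
  · rw [zcMinus_eq, zcPlus_eq] at hreg
    exact quadratic_pos_of_lt_or_gt_roots hA (hreg htt)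
  · exact quadratic_pos_of_discrim_neg hA.le (discrim_critical_neg (by linarith) ht (not_le.1 htt))

end Critical

lemma discrim_cycleQuadratic_neg {q t z : ℝ} (hq : 2 ≤ q) (ht : 1 < t) (hz : 0 < z)
    (hreg : tThree q ≤ t → z < zcMinus q t ∨ zcPlus q t < z) :
    discrim (z * ((q - 1) * t + (1 + (q - 2) * t) ^ 2 * z))
      (-(z * (t * ((q - 1) * t) - (1 + (q - 2) * t)))) (1 + (1 + (q - 2) * t) * z * t) < 0 := by
  have hcrit := critical_quadratic_pos hq ht hreg
  rw [criticalLinCoeff] at hcrit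
  rw [discrim]
  linear_combination mul_pos hz hcrit

/-- **Lemma (region 𝓡₁: unique attracting fixed point).**
Let `q ≥ 3` be real, `t > 1`, `z > 0`, and suppose that whenever `t ≥ t₃(q)` one has
`z < z_c^−(t,q)` or `z > z_c^+(t,q)`.  Then the second iterate `R²_{z,t,q}` has exactly
one real fixed point; it lies in `(0,∞)` and is an attracting fixed point of the first
iterate `R_{z,t,q}`. -/
theorem region_one_unique_attracting_fixed_point
    (q : ℝ) (hq : 3 ≤ q) (t : ℝ) (ht : 1 < t) (z : ℝ) (hz : 0 < z)
    (hreg : tThree q ≤ t → z < zcMinus q t ∨ zcPlus q t < z) :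
    ∃ w : ℝ, 0 < w ∧ Rmap2 z t q w = w ∧ Rmap z t q w = w ∧
      |deriv (Rmap z t q) w| < 1 ∧
      ∀ w' : ℝ, Rmap2 z t q w' = w' → w' = w := by
  have hq1 : 0 ≤ q - 1 := by linarith
  have hq2 : 0 ≤ q - 2 := by linarith
  have hc : 0 ≤ (t - 1) * (1 + (q - 1) * t) := mul_nonneg (by linarith) (by positivity)
  obtain ⟨w, hw, hfix, hderiv, huniq⟩ := renormMap_unique_attracting_fixedPoint
    (a := (q - 1) * t) (b := 1 + (q - 2) * t) (by positivity) (by positivity) (by linarith) hz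
    (by linarith) (discrim_cycleQuadratic_neg (by linarith) ht hz hreg)
  simp only [Rmap2, Rmap_eq_renormMap]
  exact ⟨w, hw, by rw [hfix, hfix], hfix, hderiv, huniq⟩
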